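/- The margin Φ_{x,x̃}(p_A, c_A) = ρ̲_{x,x̃}(p_A, c_A) − ρ̄_{x,x̃}(p_B, c_B) is invariant under any permutation π of [N] that preserves each region C_i and fixes the per-region disagreement counts; consequently Φ_{x,x̃} depends on x̃ only through the vector (‖x_{C_i} − x̃_{C_i}‖_0)_{i=1}^C. -/

import Mathlib

/-- Probability `P(φ(x) = z)` for the anisotropic flip channel with region map `c` and
flip probabilities `p`. -/
noncomputable def flipP {N C : ℕ} (c : Fin N → Fin C) (p : Fin C → ℝ)
    (x : Fin N → Bool) (z : Fin N → Bool) : ℝ :=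
  ∏ k, if z k = x k then 1 - p (c k) else p (c k)

/-- `P(h(φ(x)) = y)` for a classifier `h`. -/
noncomputable def classProb {N : ℕ} {Y : Type} [DecidableEq Y]
    (P : (Fin N → Bool) → ℝ) (h : (Fin N → Bool) → Y) (y : Y) : ℝ :=
  ∑ z, P z * (if h z = y then 1 else 0)

/-- The margin `Φ_{x,x̃}(p_A, c_A) = ρ̲_{x,x̃}(p_A, c_A) - ρ̄_{x,x̃}(p_B, c_B)` of the
Lee et al. framework. -/
noncomputable def Phi {N C : ℕ} (c : Fin N → Fin C) (p : Fin C → ℝ) {Y : Type}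
    [DecidableEq Y] (x xt : Fin N → Bool) (pA pB : ℝ) (cA cB : Y) : ℝ :=
  sInf {q : ℝ | ∃ h : (Fin N → Bool) → Y,
      classProb (flipP c p x) h cA = pA ∧ q = classProb (flipP c p xt) h cA} -
  sSup {q : ℝ | ∃ h : (Fin N → Bool) → Y,
      classProb (flipP c p x) h cB = pB ∧ q = classProb (flipP c p xt) h cB}

open Finset

/-! The margin `Φ` only sees the pair of output distributions `(φ(x), φ(x̃))` up to a common
relabelling of the outcome space, since any classifier can be transported along the relabelling.
The channel commutes with two families of relabellings: permutations of coordinates that preserve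
every region, and XOR with a fixed mask. XOR with `x` moves the pair `(x, x̃)` to
`(0, x ⊕ x̃)`, and two disagreement patterns with the same count in every region differ by a
region-preserving permutation, which fixes `0`. -/

section Relabelling

variable {N : ℕ} {Y : Type} [DecidableEq Y]

lemma classProb_comp_equiv (P : (Fin N → Bool) → ℝ) (σ : (Fin N → Bool) ≃ (Fin N → Bool))
    (h : (Fin N → Bool) → Y) (y : Y) :
    classProb (P ∘ σ) h y = classProb P (h ∘ σ.symm) y :=
  Fintype.sum_equiv σ _ _ fun z => by simp

lemma setOf_classProb_comp_equiv (P Q : (Fin N → Bool) → ℝ)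
    (σ : (Fin N → Bool) ≃ (Fin N → Bool)) (y : Y) (r : ℝ) :
    {q : ℝ | ∃ h : (Fin N → Bool) → Y, classProb (P ∘ σ) h y = r ∧ q = classProb (Q ∘ σ) h y} =
    {q : ℝ | ∃ h : (Fin N → Bool) → Y, classProb P h y = r ∧ q = classProb Q h y} := by
  ext q
  simp only [Set.mem_ofPred_eq, classProb_comp_equiv]
  exact ((σ.arrowCongr (Equiv.refl Y)).surjective.exists
    (p := fun h => classProb P h y = r ∧ q = classProb Q h y)).symm

lemma Phi_eq_of_flipP_comp_equiv {C : ℕ} (c : Fin N → Fin C) (p : Fin C → ℝ)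
    {x xt x' xt' : Fin N → Bool} (pA pB : ℝ) (cA cB : Y) (σ : (Fin N → Bool) ≃ (Fin N → Bool))
    (hx : flipP c p x' = flipP c p x ∘ σ) (hxt : flipP c p xt' = flipP c p xt ∘ σ) :
    Phi c p x' xt' pA pB cA cB = Phi c p x xt pA pB cA cB := by
  simp only [Phi, hx, hxt, setOf_classProb_comp_equiv]

end Relabelling

section ChannelSymmetries

variable {N C : ℕ} (c : Fin N → Fin C) (p : Fin C → ℝ)

lemma flipP_comp_perm {π : Equiv.Perm (Fin N)} (hπ : ∀ k, c (π k) = c k) (x : Fin N → Bool) :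
    flipP c p (x ∘ π) = flipP c p x ∘ π.arrowCongr (Equiv.refl Bool) := by
  funext z
  simp only [flipP, Function.comp_apply, Equiv.arrowCongr_apply, Equiv.coe_refl]
  exact Fintype.prod_equiv π _ _ fun k => by simp [hπ]

def xorMask (m : Fin N → Bool) : Equiv.Perm (Fin N → Bool) :=
  Function.Involutive.toPerm (fun z k => m k ^^ z k) fun z => by
    funext k; simp

lemma flipP_xor (m x : Fin N → Bool) :
    flipP c p (fun k => m k ^^ x k) = flipP c p x ∘ xorMask m := by
  funext z
  refine Fintype.prod_congr _ _ fun k => ?_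
  have hflip : (z k = (m k ^^ x k)) ↔ ((m k ^^ z k) = x k) := by
    cases m k <;> cases x k <;> cases z k <;> decide
  exact if_congr hflip rfl rfl

variable {Y : Type} [DecidableEq Y] (pA pB : ℝ) (cA cB : Y)

lemma Phi_comp_perm {π : Equiv.Perm (Fin N)} (hπ : ∀ k, c (π k) = c k) (x xt : Fin N → Bool) :
    Phi c p (x ∘ π) (xt ∘ π) pA pB cA cB = Phi c p x xt pA pB cA cB :=
  Phi_eq_of_flipP_comp_equiv c p pA pB cA cB _ (flipP_comp_perm c p hπ x)
    (flipP_comp_perm c p hπ xt)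

lemma Phi_xor (m x xt : Fin N → Bool) :
    Phi c p (fun k => m k ^^ x k) (fun k => m k ^^ xt k) pA pB cA cB =
      Phi c p x xt pA pB cA cB :=
  Phi_eq_of_flipP_comp_equiv c p pA pB cA cB _ (flipP_xor c p m x) (flipP_xor c p m xt)

end ChannelSymmetries

lemma exists_perm_of_card_filter_eq {α ι : Type*} [Fintype α] [DecidableEq ι] (c : α → ι)
    (d d' : α → Bool) (h : ∀ i, #{a | c a = i ∧ d a = true} = #{a | c a = i ∧ d' a = true}) :
    ∃ π : Equiv.Perm α, (∀ a, c (π a) = c a) ∧ ∀ a, d' (π a) = d a := by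
  have hsplit : ∀ (e : α → Bool) (i : ι),
      #{a | c a = i ∧ e a = true} + #{a | c a = i ∧ e a = false} = #{a | c a = i} := by
    intro e i
    simpa only [filter_filter, Bool.not_eq_true] using
      card_filter_add_card_filter_not (s := {a | c a = i}) (fun a => e a = true)
  have hfiber : ∀ v : ι × Bool,
      #{a | (c a, d a) = v} = #{a | (c a, d' a) = v} := by
    rintro ⟨i, b⟩
    simp only [Prod.mk.injEq]
    cases b
    · have := hsplit d i; have := hsplit d' i; have := h i; omega
    · exact h i
  let e : ∀ v, {a // (c a, d a) = v} ≃ {a // (c a, d' a) = v} := fun v =>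
    Fintype.equivOfCardEq (by simpa only [Fintype.card_subtype] using hfiber v)
  refine ⟨Equiv.ofFiberEquiv e, fun a => ?_, fun a => ?_⟩
  · exact congrArg Prod.fst (Equiv.ofFiberEquiv_map e a)
  · exact congrArg Prod.snd (Equiv.ofFiberEquiv_map e a)

theorem stmt_16_general (N C : ℕ) (c : Fin N → Fin C) (p : Fin C → ℝ)
    (Y : Type) [DecidableEq Y]
    (x xt : Fin N → Bool) (pA pB : ℝ) (cA cB : Y) :
    (∀ π : Equiv.Perm (Fin N), (∀ k, c (π k) = c k) →
      Phi c p (x ∘ π) (xt ∘ π) pA pB cA cB = Phi c p x xt pA pB cA cB) ∧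
    (∀ xt' : Fin N → Bool,
      (∀ i, (Finset.univ.filter (fun k => c k = i ∧ x k ≠ xt k)).card =
            (Finset.univ.filter (fun k => c k = i ∧ x k ≠ xt' k)).card) →
      Phi c p x xt pA pB cA cB = Phi c p x xt' pA pB cA cB) := by
  refine ⟨fun π hπ => Phi_comp_perm c p pA pB cA cB hπ x xt, fun xt' hcount => ?_⟩
  have hreduce : ∀ w, Phi c p x w pA pB cA cB =
      Phi c p (fun _ => false) (fun k => x k ^^ w k) pA pB cA cB := fun w => by
    simpa only [Bool.xor_self] using (Phi_xor c p pA pB cA cB x x w).symm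
  obtain ⟨π, hcπ, hdπ⟩ := exists_perm_of_card_filter_eq c (fun k => x k ^^ xt k)
    (fun k => x k ^^ xt' k) (by simpa only [Bool.xor_iff_ne] using hcount)
  calc Phi c p x xt pA pB cA cB
      = Phi c p ((fun _ => false) ∘ π) ((fun k => x k ^^ xt' k) ∘ π) pA pB cA cB := by
        rw [hreduce]; congr 1; exact (funext hdπ).symm
    _ = Phi c p x xt' pA pB cA cB := by rw [Phi_comp_perm c p pA pB cA cB hcπ, hreduce]

/-- The margin `Φ_{x,x̃}` is invariant under any permutation of coordinates preserving each
region `C_i` (applied simultaneously to `x` and `x̃`, which fixes the per-region disagreement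
counts); consequently `Φ_{x,x̃}` depends on `x̃` only through the vector of per-region
Hamming distances `(‖x_{C_i} - x̃_{C_i}‖₀)_i`. -/
theorem stmt_16 (N C : ℕ) (c : Fin N → Fin C) (p : Fin C → ℝ)
    (hp : ∀ i, 0 < p i ∧ p i < 1) (Y : Type) [DecidableEq Y]
    (x xt : Fin N → Bool) (pA pB : ℝ) (cA cB : Y) :
    (∀ π : Equiv.Perm (Fin N), (∀ k, c (π k) = c k) →
      Phi c p (x ∘ π) (xt ∘ π) pA pB cA cB = Phi c p x xt pA pB cA cB) ∧
    (∀ xt' : Fin N → Bool,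
      (∀ i, (Finset.univ.filter (fun k => c k = i ∧ x k ≠ xt k)).card =
            (Finset.univ.filter (fun k => c k = i ∧ x k ≠ xt' k)).card) →
      Phi c p x xt pA pB cA cB = Phi c p x xt' pA pB cA cB) :=
  stmt_16_general N C c p Y x xt pA pB cA cB
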